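/- Let (Λ,η) be a full isothermic surface in S^n, n ≥ 3, with two Darboux transforms Λ̂₁ and Λ̂₂ of distinct parameters m₁ ≠ m₂. The spherical systems of Λ and Λ̂₁ and of Λ and Λ̂₂ coincide if and only if (Λ,η) is a special isothermic surface of type 1 with respect to a polynomial conserved quantity p(t) for which Λ̂₁ and Λ̂₂ are complementary surfaces. -/

import Mathlib

noncomputable section

open Finset

/-- Minkowski space `ℝ^{n+1,1}`, modelled on `Fin (n+2) → ℝ`. -/
abbrev MV (n : ℕ) : Type := EuclideanSpace ℝ (Fin (n + 2))

/-- The Minkowski inner product of signature `(n+1,1)`. -/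
def mink (n : ℕ) (x y : MV n) : ℝ :=
  ∑ i : Fin (n + 1), x i.castSucc * y i.castSucc
    - x (Fin.last (n + 1)) * y (Fin.last (n + 1))

/-- The light cone `L ⊂ ℝ^{n+1,1}`. -/
def LightCone (n : ℕ) : Set (MV n) := {v | v ≠ 0 ∧ mink n v v = 0}

/-- The skew endomorphism `u ∧ v`, acting by `(u ∧ v) w = (u,w)v − (v,w)u`. -/
def wedge (n : ℕ) (u v w : MV n) : MV n :=
  mink n u w • v - mink n v w • u

/-- The surface domain: a two-dimensional coordinate chart. -/
abbrev Surf : Type := ℝ × ℝ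

/-- the coordinate direction ∂/∂u -/
def du : Surf := (1, 0)

/-- the coordinate direction ∂/∂v -/
def dv : Surf := (0, 1)

/-- partial derivative of a section in a coordinate direction -/
def pd {n : ℕ} (e : Surf) (f : Surf → MV n) (x : Surf) : MV n :=
  fderiv ℝ f x e

lemma mink_add_left (n : ℕ) (a b c : MV n) :
    mink n (a + b) c = mink n a c + mink n b c := by
  simp [mink, PiLp.add_apply, add_mul, Finset.sum_add_distrib]; ring

lemma mink_smul_left (n : ℕ) (r : ℝ) (a c : MV n) :
    mink n (r • a) c = r * mink n a c := by
  simp [mink, PiLp.smul_apply, smul_eq_mul, mul_sub, Finset.mul_sum, mul_assoc]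

lemma mink_zero_left (n : ℕ) (c : MV n) : mink n 0 c = 0 := by
  simp [mink]

/-- An isothermic surface `(Λ,η)` in `S^n = P(L)`, given by a nowhere-zero null
lift `F` of the immersion `Λ` together with the 1-form
`η = F ∧ W₁ du + F ∧ W₂ dv` with values in `Λ ∧ Λ^⊥`. -/
structure IsothermicSurface (n : ℕ) : Type where
  F : Surf → MV n
  W₁ : Surf → MV n
  W₂ : Surf → MV n
  smooth_F : ContDiff ℝ (⊤ : ℕ∞) F
  smooth_W₁ : ContDiff ℝ (⊤ : ℕ∞) W₁
  smooth_W₂ : ContDiff ℝ (⊤ : ℕ∞) W₂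
  F_ne : ∀ x, F x ≠ 0
  F_null : ∀ x, mink n (F x) (F x) = 0
  immersed : ∀ x, LinearIndependent ℝ ![F x, pd du F x, pd dv F x]
  W₁_perp : ∀ x, mink n (F x) (W₁ x) = 0
  W₂_perp : ∀ x, mink n (F x) (W₂ x) = 0
  eta_ne : ∃ x z, wedge n (F x) (W₁ x) z ≠ 0 ∨ wedge n (F x) (W₂ x) z ≠ 0
  eta_closed : ∀ x z,
    fderiv ℝ (fun y => wedge n (F y) (W₂ y) z) x du
      = fderiv ℝ (fun y => wedge n (F y) (W₁ y) z) x dv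

/-- `s` is a parallel section for the flat connection `∇^t = d + tη`. -/
def ParallelSection (n : ℕ) (S : IsothermicSurface n) (t : ℝ)
    (s : Surf → MV n) : Prop :=
  ∀ x, fderiv ℝ s x du + t • wedge n (S.F x) (S.W₁ x) (s x) = 0
     ∧ fderiv ℝ s x dv + t • wedge n (S.F x) (S.W₂ x) (s x) = 0

/-- A polynomial conserved quantity of degree `d` of the isothermic surface
`(Λ,η)`: a polynomial `p(t) = Σ_{k=0}^d p_k t^k` of (smooth) sections, of exact
degree `d`, with `∇^t p(t) = 0` for all `t`. -/
structure PolyConservedQuantity (n : ℕ) (S : IsothermicSurface n) (d : ℕ) : Type where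
  coeff : ℕ → Surf → MV n
  smooth : ∀ k, ContDiff ℝ (⊤ : ℕ∞) (coeff k)
  coeff_eq_zero : ∀ k, d < k → coeff k = 0
  top_ne : coeff d ≠ 0
  conserved : ∀ t : ℝ, ParallelSection n S t
    (fun x => ∑ k ∈ Finset.range (d + 1), t ^ k • coeff k x)

/-- evaluation `p(t)` of a polynomial conserved quantity -/
def pcEval {n : ℕ} {S : IsothermicSurface n} {d : ℕ}
    (p : PolyConservedQuantity n S d) (t : ℝ) (x : Surf) : MV n :=
  ∑ k ∈ Finset.range (d + 1), t ^ k • p.coeff k x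

/-- `(Λ,η)` is a special isothermic surface of type `d`. -/
def SpecialOfType (n : ℕ) (S : IsothermicSurface n) (d : ℕ) : Prop :=
  Nonempty (PolyConservedQuantity n S d)

/-- `p₀ ∈ ⟨w⟩`: the polynomial conserved quantity exhibits `(Λ,η)` as special
isothermic in the space-form `E(w)`. -/
def InSpaceForm {n : ℕ} {S : IsothermicSurface n} {d : ℕ}
    (p : PolyConservedQuantity n S d) (w : MV n) : Prop :=
  ∃ c : ℝ, ∀ x, p.coeff 0 x = c • w

/-- fullness: the image of `Λ` lies in no proper subsphere -/
def Full (n : ℕ) (S : IsothermicSurface n) : Prop :=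
  ¬ ∃ p : MV n, p ≠ 0 ∧ ∀ x, mink n p (S.F x) = 0
/-- A Darboux transform `Λ̂` of `(Λ,η)` with parameter `m`, given by a
`∇^m`-parallel null lift `G` spanning an immersed surface with `Λ̂ ∩ Λ = 0`. -/
structure DarbouxTransform (n : ℕ) (S : IsothermicSurface n) (m : ℝ) : Type where
  G : Surf → MV n
  smooth_G : ContDiff ℝ (⊤ : ℕ∞) G
  G_ne : ∀ x, G x ≠ 0
  G_null : ∀ x, mink n (G x) (G x) = 0
  immersed : ∀ x, LinearIndependent ℝ ![G x, pd du G x, pd dv G x]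
  disjoint : ∀ x, G x ∉ Submodule.span ℝ {S.F x}
  parallel : ParallelSection n S m G

/-- The gauge transformation `Γ_{⟨F⟩}^{⟨G⟩}(c)`: acts as `c` on `⟨G⟩`, as `1` on
`(⟨F⟩ ⊕ ⟨G⟩)^⊥` and as `c⁻¹` on `⟨F⟩`. -/
def gaugeG (n : ℕ) (F G : MV n) (c : ℝ) (z : MV n) : MV n :=
  ((mink n G z / mink n F G) / c) • F
    + (c * (mink n F z / mink n F G)) • G
    + (z - (mink n G z / mink n F G) • F - (mink n F z / mink n F G) • G)

/-- `Γ_Λ^{Λ̂}(1 − t/m) · (d + tη) = d + tη̂` for all `t ≠ m`: the gauge relation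
between the pencils of flat connections of an isothermic surface `S` and of (an
isothermic structure `T` on) its Darboux transform with parameter `m`. -/
def GaugeRel (n : ℕ) (S T : IsothermicSurface n) (m : ℝ) : Prop :=
  ∀ t : ℝ, t ≠ m → ∀ s : Surf → MV n, ContDiff ℝ (⊤ : ℕ∞) s → ∀ x : Surf,
    (fderiv ℝ (fun y => gaugeG n (S.F y) (T.F y) (1 - t / m) (s y)) x du
        + t • wedge n (T.F x) (T.W₁ x) (gaugeG n (S.F x) (T.F x) (1 - t / m) (s x))
      = gaugeG n (S.F x) (T.F x) (1 - t / m)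
          (fderiv ℝ s x du + t • wedge n (S.F x) (S.W₁ x) (s x)))
    ∧ (fderiv ℝ (fun y => gaugeG n (S.F y) (T.F y) (1 - t / m) (s y)) x dv
        + t • wedge n (T.F x) (T.W₂ x) (gaugeG n (S.F x) (T.F x) (1 - t / m) (s x))
      = gaugeG n (S.F x) (T.F x) (1 - t / m)
          (fderiv ℝ s x dv + t • wedge n (S.F x) (S.W₂ x) (s x)))

/-- `Λ̂ = ⟨p(m)⟩` with `(p(m),p(m)) = 0`: the Darboux transform `D` is a
complementary surface of `(Λ,η)` with respect to `p(t)`. -/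
def IsComplementary (n : ℕ) {S : IsothermicSurface n} {d : ℕ}
    (p : PolyConservedQuantity n S d) {m : ℝ} (D : DarbouxTransform n S m) : Prop :=
  (∀ x, mink n (pcEval p m x) (pcEval p m x) = 0) ∧
  (∀ x, Submodule.span ℝ {D.G x} = Submodule.span ℝ {pcEval p m x})

/-- `m` is a repeated root of the (constant-coefficient) polynomial `(p(t),p(t))`. -/
def IsRepeatedRootAt {n : ℕ} {S : IsothermicSurface n} {d : ℕ}
    (p : PolyConservedQuantity n S d) (m : ℝ) : Prop :=
  ∀ x, mink n (pcEval p m x) (pcEval p m x) = 0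
    ∧ deriv (fun t : ℝ => mink n (pcEval p t x) (pcEval p t x)) m = 0
/-- metric coefficient `g₁₁ = (F_u,F_u)` of the induced metric -/
def gUU (n : ℕ) (F : Surf → MV n) (x : Surf) : ℝ := mink n (pd du F x) (pd du F x)

/-- metric coefficient `g₁₂ = (F_u,F_v)` -/
def gUV (n : ℕ) (F : Surf → MV n) (x : Surf) : ℝ := mink n (pd du F x) (pd dv F x)

/-- metric coefficient `g₂₂ = (F_v,F_v)` -/
def gVV (n : ℕ) (F : Surf → MV n) (x : Surf) : ℝ := mink n (pd dv F x) (pd dv F x)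

/-- `(𝐇, N)`, the inner product of the mean curvature vector of `F` (in a
space-form `E(w)`) with a normal field `N`: half the trace with respect to the
induced metric of the `N`-component of the second fundamental form. -/
def meanCurv (n : ℕ) (F N : Surf → MV n) (x : Surf) : ℝ :=
  (gVV n F x * mink n (pd du (pd du F) x) (N x)
    - 2 * gUV n F x * mink n (pd du (pd dv F) x) (N x)
    + gUU n F x * mink n (pd dv (pd dv F) x) (N x))
  / (2 * (gUU n F x * gVV n F x - gUV n F x ^ 2))

/-- `N` is a unit normal field of the lift `F : Σ → E(w)`. -/
def IsUnitNormal (n : ℕ) (F N : Surf → MV n) (w : MV n) : Prop :=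
  (∀ x, mink n (N x) (N x) = 1) ∧ (∀ x, mink n (N x) w = 0)
    ∧ (∀ x, mink n (N x) (F x) = 0)
    ∧ (∀ x, mink n (N x) (pd du F x) = 0) ∧ (∀ x, mink n (N x) (pd dv F x) = 0)

/-- `N` is parallel for the normal connection of `F : Σ → E(w)`: the derivative
of `N` has no component in the normal bundle of `F` in `E(w)`. -/
def ParallelNormal (n : ℕ) (F N : Surf → MV n) (w : MV n) : Prop :=
  ∀ x e, fderiv ℝ N x e ∈ Submodule.span ℝ {F x, pd du F x, pd dv F x, w}

/-- the chart coordinates `(u,v)` are conformal curvature line coordinates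
corresponding to `η`, with conformal factor `e^{2θ}`:
`I = e^{2θ}(du² + dv²)` and `η = e^{−2θ} F ∧ (−F_u du + F_v dv)`. -/
def ConformalCoords (n : ℕ) (S : IsothermicSurface n) (θ : Surf → ℝ) : Prop :=
  ContDiff ℝ (⊤ : ℕ∞) θ
  ∧ (∀ x, mink n (pd du S.F x) (pd du S.F x) = Real.exp (2 * θ x))
  ∧ (∀ x, mink n (pd dv S.F x) (pd dv S.F x) = Real.exp (2 * θ x))
  ∧ (∀ x, mink n (pd du S.F x) (pd dv S.F x) = 0)
  ∧ (∀ x z, wedge n (S.F x) (S.W₁ x) z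
      = Real.exp (-(2 * θ x)) • wedge n (S.F x) (-pd du S.F x) z)
  ∧ (∀ x z, wedge n (S.F x) (S.W₂ x) z
      = Real.exp (-(2 * θ x)) • wedge n (S.F x) (pd dv S.F x) z)

/-- the second fundamental form of the lift `F` in `E(w)` with respect to the
unit normal `N` is `II = e^{2θ}(k₁ du² + k₂ dv²)`. -/
def PrincipalCurvatures (n : ℕ) (S : IsothermicSurface n) (N : Surf → MV n)
    (θ k₁ k₂ : Surf → ℝ) : Prop :=
  (∀ x, mink n (pd du (pd du S.F) x) (N x) = Real.exp (2 * θ x) * k₁ x)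
  ∧ (∀ x, mink n (pd du (pd dv S.F) x) (N x) = 0)
  ∧ (∀ x, mink n (pd dv (pd dv S.F) x) (N x) = Real.exp (2 * θ x) * k₂ x)

/-- partial derivative of a real function on the surface -/
def pdR (e : Surf) (f : Surf → ℝ) (x : Surf) : ℝ := fderiv ℝ f x e
/-- `(Λ^c, η^c)` is the Christoffel transform of `(Λ,η)` with respect to the
pair `(v∞, v₀)`, witnessed by the stereoprojections `f`, `f^c` into
`ℝ^n = ⟨v₀,v∞⟩^⊥`:  `F = exp(f ∧ v∞)v₀`, `F^c = exp(f^c ∧ v₀)v∞`,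
`η = Ad(exp(f ∧ v∞))(df^c ∧ v₀)` and `η^c = Ad(exp(f^c ∧ v₀))(df ∧ v∞)`. -/
def IsChristoffelPair (n : ℕ) (S Sc : IsothermicSurface n) (vinf v0 : MV n)
    (f fc : Surf → MV n) : Prop :=
  vinf ∈ LightCone n ∧ v0 ∈ LightCone n ∧ mink n v0 vinf = -1
  ∧ ContDiff ℝ (⊤ : ℕ∞) f ∧ ContDiff ℝ (⊤ : ℕ∞) fc
  ∧ (∀ x, mink n (f x) v0 = 0) ∧ (∀ x, mink n (f x) vinf = 0)
  ∧ (∀ x, mink n (fc x) v0 = 0) ∧ (∀ x, mink n (fc x) vinf = 0)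
  ∧ (∀ x, S.F x = v0 + f x + (mink n (f x) (f x) / 2) • vinf)
  ∧ (∀ x, Sc.F x = vinf + fc x + (mink n (fc x) (fc x) / 2) • v0)
  ∧ (∀ x z, wedge n (S.F x) (S.W₁ x) z
      = wedge n (pd du fc x + mink n (f x) (pd du fc x) • vinf) (S.F x) z)
  ∧ (∀ x z, wedge n (S.F x) (S.W₂ x) z
      = wedge n (pd dv fc x + mink n (f x) (pd dv fc x) • vinf) (S.F x) z)
  ∧ (∀ x z, wedge n (Sc.F x) (Sc.W₁ x) z
      = wedge n (pd du f x + mink n (fc x) (pd du f x) • v0) (Sc.F x) z)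
  ∧ (∀ x z, wedge n (Sc.F x) (Sc.W₂ x) z
      = wedge n (pd dv f x + mink n (fc x) (pd dv f x) • v0) (Sc.F x) z)

/-- `Φ` is an orthogonal gauge transformation with `Φ · (d + sη) = d`. -/
def IsTGauge (n : ℕ) (S : IsothermicSurface n) (s : ℝ)
    (Φ : Surf → MV n → MV n) : Prop :=
  (∀ x, IsLinearMap ℝ (Φ x))
  ∧ (∀ x z z', mink n (Φ x z) (Φ x z') = mink n z z')
  ∧ (∀ σ : Surf → MV n, ContDiff ℝ (⊤ : ℕ∞) σ → ∀ x,
      (fderiv ℝ (fun y => Φ y (σ y)) x du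
         = Φ x (fderiv ℝ σ x du + s • wedge n (S.F x) (S.W₁ x) (σ x)))
      ∧ (fderiv ℝ (fun y => Φ y (σ y)) x dv
         = Φ x (fderiv ℝ σ x dv + s • wedge n (S.F x) (S.W₂ x) (σ x))))

/-- `(Λ_s, η_s)` is the T-transform of `(Λ,η)` associated to `Φ_s`:
`Λ_s = Φ_s Λ` and `η_s = Ad(Φ_s) η`. -/
def IsTTransform (n : ℕ) (S : IsothermicSurface n) (s : ℝ)
    (Φ : Surf → MV n → MV n) (Ss : IsothermicSurface n) : Prop :=
  IsTGauge n S s Φ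
  ∧ (∀ x, Ss.F x = Φ x (S.F x))
  ∧ (∀ x z, wedge n (Ss.F x) (Ss.W₁ x) (Φ x z) = Φ x (wedge n (S.F x) (S.W₁ x) z))
  ∧ (∀ x z, wedge n (Ss.F x) (Ss.W₂ x) (Φ x z) = Φ x (wedge n (S.F x) (S.W₂ x) z))

/-- orthogonal complement with respect to the Minkowski form -/
def mperp (n : ℕ) (U : Submodule ℝ (MV n)) : Submodule ℝ (MV n) where
  carrier := {v | ∀ u ∈ U, mink n v u = 0}
  add_mem' := by
    intro a b ha hb u hu
    rw [mink_add_left, ha u hu, hb u hu, add_zero]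
  zero_mem' := by
    intro u hu; exact mink_zero_left n u
  smul_mem' := by
    intro r a ha u hu
    rw [mink_smul_left, ha u hu, mul_zero]

/-- the spherical system of `Λ` and a Darboux transform `Λ̂ = ⟨G⟩`: the
`(n−2)`-sphere congruence `C = Λ ⊕ Λ̂ ⊕ V_R^⊥`, `V_R = Λ^{(1)} ⊕ Λ̂`. -/
def sphericalSystem (n : ℕ) (S : IsothermicSurface n) (G : Surf → MV n)
    (x : Surf) : Submodule ℝ (MV n) :=
  Submodule.span ℝ {S.F x, G x}
    ⊔ mperp n (Submodule.span ℝ {S.F x, pd du S.F x, pd dv S.F x, G x})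

/-- the sphere-planes congruence `P = C + ⟨w⟩` of `Λ` and `Λ̂ = ⟨G⟩` with
respect to `w`. -/
def spherePlanes (n : ℕ) (S : IsothermicSurface n) (G : Surf → MV n)
    (w : MV n) (x : Surf) : Submodule ℝ (MV n) :=
  sphericalSystem n S G x ⊔ Submodule.span ℝ {w}

/- ===== auxiliary lemmas ===== -/
section Aux

lemma mink_comm (n : ℕ) (x y : MV n) : mink n x y = mink n y x := by
  simp [mink, mul_comm]

lemma mink_add_right (n : ℕ) (a b c : MV n) :
    mink n a (b + c) = mink n a b + mink n a c := by
  rw [mink_comm n a (b + c), mink_add_left, mink_comm n b a, mink_comm n c a]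

lemma mink_smul_right (n : ℕ) (r : ℝ) (a c : MV n) :
    mink n a (r • c) = r * mink n a c := by
  rw [mink_comm n a (r • c), mink_smul_left, mink_comm n c a]

lemma mink_zero_right (n : ℕ) (a : MV n) : mink n a 0 = 0 := by
  rw [mink_comm, mink_zero_left]

lemma mink_sub_left (n : ℕ) (a b c : MV n) :
    mink n (a - b) c = mink n a c - mink n b c := by
  rw [sub_eq_add_neg, mink_add_left, ← neg_one_smul ℝ b, mink_smul_left]; ring

lemma mink_sub_right (n : ℕ) (a b c : MV n) :
    mink n a (b - c) = mink n a b - mink n a c := by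
  rw [mink_comm n a (b - c), mink_sub_left, mink_comm n b a, mink_comm n c a]

def minkJ (n : ℕ) : MV n →L[ℝ] MV n := LinearMap.toContinuousLinearMap
  { toFun := fun x =>
      x - (2 * x (Fin.last (n + 1))) • EuclideanSpace.single (Fin.last (n + 1)) (1 : ℝ)
    map_add' := by
      intro x y
      simp only [PiLp.add_apply]
      module
    map_smul' := by
      intro r x
      simp only [PiLp.smul_apply, smul_eq_mul, RingHom.id_apply]
      module }

lemma minkJ_apply (n : ℕ) (x : MV n) :
    minkJ n x
      = x - (2 * x (Fin.last (n + 1))) • EuclideanSpace.single (Fin.last (n + 1)) (1 : ℝ) := rfl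

lemma mink_eq_inner (n : ℕ) (x y : MV n) :
    mink n x y = (inner ℝ (minkJ n x) y : ℝ) := by
  rw [minkJ_apply, inner_sub_left, real_inner_smul_left]
  have hs : (inner ℝ (EuclideanSpace.single (Fin.last (n + 1)) (1 : ℝ)) y : ℝ)
      = y (Fin.last (n + 1)) := by
    rw [EuclideanSpace.inner_single_left]; simp
  have hx : (inner ℝ x y : ℝ) = ∑ i : Fin (n + 2), x i * y i := by
    simp [PiLp.inner_apply, RCLike.inner_apply, conj_trivial, mul_comm]
  rw [hs, hx, Fin.sum_univ_castSucc, mink]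
  ring

lemma differentiableAt_mink {n : ℕ} {f g : Surf → MV n} {x : Surf}
    (hf : DifferentiableAt ℝ f x) (hg : DifferentiableAt ℝ g x) :
    DifferentiableAt ℝ (fun y => mink n (f y) (g y)) x := by
  have h : (fun y => mink n (f y) (g y))
      = fun y => (inner ℝ (minkJ n (f y)) (g y) : ℝ) := funext fun y => mink_eq_inner n _ _
  rw [h]
  exact DifferentiableAt.inner ℝ (((minkJ n).differentiableAt).comp x hf) hg

lemma fderiv_mink_apply {n : ℕ} {f g : Surf → MV n} {x : Surf}
    (hf : DifferentiableAt ℝ f x) (hg : DifferentiableAt ℝ g x) (e : Surf) :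
    fderiv ℝ (fun y => mink n (f y) (g y)) x e
      = mink n (fderiv ℝ f x e) (g x) + mink n (f x) (fderiv ℝ g x e) := by
  have h : (fun y => mink n (f y) (g y))
      = fun y => (inner ℝ (minkJ n (f y)) (g y) : ℝ) := funext fun y => mink_eq_inner n _ _
  have hJf : DifferentiableAt ℝ (fun y => minkJ n (f y)) x :=
    ((minkJ n).differentiableAt).comp x hf
  have hcomp : fderiv ℝ (fun y => minkJ n (f y)) x = (minkJ n).comp (fderiv ℝ f x) := by
    have := fderiv_comp (𝕜 := ℝ) x ((minkJ n).differentiableAt (x := f x)) hf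
    simpa [(minkJ n).fderiv, Function.comp_def] using this
  rw [h, fderiv_inner_apply (𝕜 := ℝ) hJf hg e, hcomp]
  rw [mink_eq_inner n (f x) (fderiv ℝ g x e), mink_eq_inner n (fderiv ℝ f x e) (g x)]
  simp [ContinuousLinearMap.comp_apply]
  ring

lemma fderiv_zero_fun_apply {φ : Surf → ℝ} (h : ∀ y, φ y = 0) (x e : Surf) :
    fderiv ℝ φ x e = 0 := by
  have : φ = fun _ => (0 : ℝ) := funext h
  rw [this, fderiv_fun_const]
  simp

lemma wedge_add_right (n : ℕ) (u w z z' : MV n) :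
    wedge n u w (z + z') = wedge n u w z + wedge n u w z' := by
  simp only [wedge, mink_add_right, add_smul]; abel

lemma wedge_sub_right (n : ℕ) (u w z z' : MV n) :
    wedge n u w (z - z') = wedge n u w z - wedge n u w z' := by
  simp only [wedge, mink_sub_right, sub_smul]; abel

lemma wedge_smul_right (n : ℕ) (u w : MV n) (r : ℝ) (z : MV n) :
    wedge n u w (r • z) = r • wedge n u w z := by
  simp only [wedge, mink_smul_right, mul_smul, smul_sub]

lemma mink_self_wedge {n : ℕ} {u w : MV n} (z : MV n)
    (hFW : mink n u w = 0) (hFF : mink n u u = 0) :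
    mink n u (wedge n u w z) = 0 := by
  simp [wedge, mink_sub_right, mink_smul_right, hFW, hFF]

lemma li3 {n : ℕ} {a b c : MV n} (h : LinearIndependent ℝ ![a, b, c]) {r s t : ℝ}
    (hz : r • a + s • b + t • c = 0) : r = 0 ∧ s = 0 ∧ t = 0 := by
  have h' := Fintype.linearIndependent_iff.mp h ![r, s, t] ?_
  · exact ⟨by simpa using h' 0, by simpa using h' 1, by simpa using h' 2⟩
  · rw [Fin.sum_univ_three]; simpa using hz

lemma mink_neg_right (n : ℕ) (a b : MV n) : mink n a (-b) = - mink n a b := by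
  have : (-b) = (0 : MV n) - b := by module
  rw [this, mink_sub_right, mink_zero_right, zero_sub]

lemma mem_mperp {n : ℕ} {U : Submodule ℝ (MV n)} {v : MV n} :
    v ∈ mperp n U ↔ ∀ u ∈ U, mink n v u = 0 := Iff.rfl

lemma mem_mperp_span4 {n : ℕ} {a b c d v : MV n}
    (h1 : mink n v a = 0) (h2 : mink n v b = 0) (h3 : mink n v c = 0)
    (h4 : mink n v d = 0) :
    v ∈ mperp n (Submodule.span ℝ {a, b, c, d}) := by
  rw [mem_mperp]
  intro u hu
  have hmem : ∀ w : MV n, mink n v w = 0 → w ∈ mperp n (Submodule.span ℝ {v}) := by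
    intro w hw
    rw [mem_mperp]
    intro u' hu'
    obtain ⟨r, rfl⟩ := Submodule.mem_span_singleton.mp hu'
    rw [mink_smul_right, mink_comm, hw, mul_zero]
  have hle : Submodule.span ℝ ({a, b, c, d} : Set (MV n))
      ≤ mperp n (Submodule.span ℝ {v}) := by
    rw [Submodule.span_le]
    intro w hw
    simp only [Set.mem_insert_iff, Set.mem_singleton_iff] at hw
    rcases hw with rfl | rfl | rfl | rfl
    exacts [hmem _ h1, hmem _ h2, hmem _ h3, hmem _ h4]
  have := hle hu v (Submodule.mem_span_singleton_self v)
  rw [mink_comm]; exact this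

lemma spherical_incl {n : ℕ} {F Fu Fv G₁ G₂ P₁ P₂ q : MV n} {c₁ c₂ δ : ℝ}
    (hc₁ : c₁ ≠ 0)
    (hG₁ : G₁ = c₁ • P₁) (hG₂ : G₂ = c₂ • P₂) (hP₂ : P₂ = P₁ + δ • q)
    (hd : mink n F P₁ ≠ 0)
    (hFF : mink n F F = 0) (hFu : mink n F Fu = 0) (hFv : mink n F Fv = 0)
    (hqF : mink n F q = 0) (hqu : mink n Fu q = 0) (hqv : mink n Fv q = 0) :
    Submodule.span ℝ {F, G₂} ⊔ mperp n (Submodule.span ℝ {F, Fu, Fv, G₂})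
      ≤ Submodule.span ℝ {F, G₁} ⊔ mperp n (Submodule.span ℝ {F, Fu, Fv, G₁}) := by
  apply sup_le
  · rw [Submodule.span_le]
    intro w hw
    simp only [Set.mem_insert_iff, Set.mem_singleton_iff] at hw
    rcases hw with rfl | hw2
    · exact Submodule.mem_sup_left (Submodule.subset_span (by simp))
    · rw [hw2]
      set τ : ℝ := mink n q P₁ / mink n F P₁ with hτ
      have hr : (q - τ • F) ∈ mperp n (Submodule.span ℝ {F, Fu, Fv, G₁}) := by
        apply mem_mperp_span4
        · rw [mink_sub_left, mink_smul_left, mink_comm n q F, hqF, hFF]; ring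
        · rw [mink_sub_left, mink_smul_left, mink_comm n q Fu, hqu, hFu]; ring
        · rw [mink_sub_left, mink_smul_left, mink_comm n q Fv, hqv, hFv]; ring
        · rw [hG₁, mink_smul_right, mink_sub_left, mink_smul_left, hτ,
            div_mul_cancel₀ _ hd, sub_self, mul_zero]
      have hy : (c₂ • P₁ + (c₂ * δ * τ) • F) ∈ Submodule.span ℝ ({F, G₁} : Set (MV n)) := by
        apply Submodule.mem_span_pair.mpr
        refine ⟨c₂ * δ * τ, c₂ * c₁⁻¹, ?_⟩
        rw [hG₁, smul_smul]
        have hcc : c₂ * c₁⁻¹ * c₁ = c₂ := by field_simp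
        rw [hcc]
        module
      have hsum : G₂ = (c₂ • P₁ + (c₂ * δ * τ) • F) + (c₂ * δ) • (q - τ • F) := by
        rw [hG₂, hP₂]; module
      rw [hsum]
      exact add_mem (Submodule.mem_sup_left hy)
        (Submodule.mem_sup_right (Submodule.smul_mem _ _ hr))
  · intro z hz
    rw [mem_mperp] at hz
    have hzF : mink n z F = 0 := hz F (Submodule.subset_span (by simp))
    have hzu : mink n z Fu = 0 := hz Fu (Submodule.subset_span (by simp))
    have hzv : mink n z Fv = 0 := hz Fv (Submodule.subset_span (by simp))
    set σ : ℝ := mink n z P₁ / mink n F P₁ with hσ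
    have hz' : (z - σ • F) ∈ mperp n (Submodule.span ℝ {F, Fu, Fv, G₁}) := by
      apply mem_mperp_span4
      · rw [mink_sub_left, mink_smul_left, hzF, hFF]; ring
      · rw [mink_sub_left, mink_smul_left, hzu, hFu]; ring
      · rw [mink_sub_left, mink_smul_left, hzv, hFv]; ring
      · rw [hG₁, mink_smul_right, mink_sub_left, mink_smul_left, hσ,
          div_mul_cancel₀ _ hd, sub_self, mul_zero]
    have hy : (σ • F) ∈ Submodule.span ℝ ({F, G₁} : Set (MV n)) :=
      Submodule.mem_span_pair.mpr ⟨σ, 0, by module⟩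
    have hzz : z = σ • F + (z - σ • F) := by module
    rw [hzz]
    exact add_mem (Submodule.mem_sup_left hy) (Submodule.mem_sup_right hz')

lemma solve2 {V : Type*} [AddCommGroup V] [Module ℝ V] {A B : V}
    (h1 : A + B = 0) (h2 : (2:ℝ) • A + (4:ℝ) • B = 0) : A = 0 ∧ B = 0 := by
  have hB : (2:ℝ) • B = 0 := by
    have h3 : (2:ℝ) • (A + B) = 0 := by rw [h1, smul_zero]
    have h4 : (2:ℝ) • A + (4:ℝ) • B - (2:ℝ) • (A + B) = (2:ℝ) • B := by module
    rw [← h4, h2, h3, sub_zero]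
  have hBB : B = 0 := by
    rcases smul_eq_zero.mp hB with h | h
    · norm_num at h
    · exact h
  refine ⟨?_, hBB⟩
  rw [hBB, add_zero] at h1
  exact h1

lemma darboux_fderiv {n : ℕ} {S : IsothermicSurface n} {m : ℝ}
    (D : DarbouxTransform n S m) (x : Surf) :
    fderiv ℝ D.G x du = -(m • wedge n (S.F x) (S.W₁ x) (D.G x))
      ∧ fderiv ℝ D.G x dv = -(m • wedge n (S.F x) (S.W₂ x) (D.G x)) :=
  ⟨eq_neg_of_add_eq_zero_left (D.parallel x).1,
   eq_neg_of_add_eq_zero_left (D.parallel x).2⟩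

lemma darboux_not_both {n : ℕ} {S : IsothermicSurface n} {m : ℝ}
    (D : DarbouxTransform n S m) (x : Surf) {s t : ℝ}
    (hu : fderiv ℝ D.G x du = s • S.F x) (hv : fderiv ℝ D.G x dv = t • S.F x) :
    False := by
  have h0 := li3 (D.immersed x) (r := 0) (s := t) (t := -s) ?_
  · have hs : s = 0 := by have := h0.2.2; linarith
    have ht : t = 0 := h0.2.1
    have hzero : pd du D.G x = 0 := by
      show fderiv ℝ D.G x du = 0
      rw [hu, hs, zero_smul]
    have h1 := li3 (D.immersed x) (r := 0) (s := 1) (t := 0) ?_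
    · exact one_ne_zero h1.2.1
    · rw [hzero]; module
  · show (0:ℝ) • D.G x + t • pd du D.G x + (-s) • pd dv D.G x = 0
    show (0:ℝ) • D.G x + t • fderiv ℝ D.G x du + (-s) • fderiv ℝ D.G x dv = 0
    rw [hu, hv]
    module

lemma darboux_FG_ne {n : ℕ} {S : IsothermicSurface n} {m : ℝ}
    (D : DarbouxTransform n S m) (x : Surf) :
    mink n (S.F x) (D.G x) ≠ 0 := by
  intro h0
  have hu : fderiv ℝ D.G x du = (m * mink n (S.W₁ x) (D.G x)) • S.F x := by
    rw [(darboux_fderiv D x).1, wedge, h0]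
    module
  have hv : fderiv ℝ D.G x dv = (m * mink n (S.W₂ x) (D.G x)) • S.F x := by
    rw [(darboux_fderiv D x).2, wedge, h0]
    module
  exact darboux_not_both D x hu hv

lemma wedge_of_span {n : ℕ} {F W : MV n} (h : W ∈ Submodule.span ℝ {F}) (z : MV n) :
    wedge n F W z = 0 := by
  obtain ⟨lam, rfl⟩ := Submodule.mem_span_singleton.mp h
  rw [wedge, mink_smul_left]
  module

lemma darboux_W_notspan {n : ℕ} {S : IsothermicSurface n} {m : ℝ}
    (D : DarbouxTransform n S m) (x : Surf) :
    S.W₁ x ∉ Submodule.span ℝ {S.F x} ∨ S.W₂ x ∉ Submodule.span ℝ {S.F x} := by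
  by_contra hcon
  push_neg at hcon
  have hu : fderiv ℝ D.G x du = (0:ℝ) • S.F x := by
    rw [(darboux_fderiv D x).1, wedge_of_span hcon.1]
    module
  have hv : fderiv ℝ D.G x dv = (0:ℝ) • S.F x := by
    rw [(darboux_fderiv D x).2, wedge_of_span hcon.2]
    module
  exact darboux_not_both D x hu hv

lemma notspan_wedge_zero {n : ℕ} {F W q : MV n} (hns : W ∉ Submodule.span ℝ {F})
    (hw : wedge n F W q = 0) : mink n F q = 0 := by
  by_contra hne
  apply hns
  have h1 : mink n F q • W = mink n W q • F := by
    have := sub_eq_zero.mp (by rw [← wedge]; exact hw)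
    exact this
  apply Submodule.mem_span_singleton.mpr
  refine ⟨(mink n F q)⁻¹ * mink n W q, ?_⟩
  rw [mul_smul, ← h1, inv_smul_smul₀ hne]

lemma pcEval_eq {n : ℕ} {S : IsothermicSurface n} (p : PolyConservedQuantity n S 1)
    (t : ℝ) (x : Surf) : pcEval p t x = p.coeff 0 x + t • p.coeff 1 x := by
  simp [pcEval, Finset.sum_range_succ]

lemma pcq_eqs {n : ℕ} {S : IsothermicSurface n} (p : PolyConservedQuantity n S 1) (x : Surf) :
    (fderiv ℝ (p.coeff 0) x du = 0 ∧ fderiv ℝ (p.coeff 0) x dv = 0)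
    ∧ (fderiv ℝ (p.coeff 1) x du = - wedge n (S.F x) (S.W₁ x) (p.coeff 0 x)
        ∧ fderiv ℝ (p.coeff 1) x dv = - wedge n (S.F x) (S.W₂ x) (p.coeff 0 x))
    ∧ (wedge n (S.F x) (S.W₁ x) (p.coeff 1 x) = 0
        ∧ wedge n (S.F x) (S.W₂ x) (p.coeff 1 x) = 0) := by
  have hd0 : DifferentiableAt ℝ (p.coeff 0) x :=
    ((p.smooth 0).differentiable (by simp)).differentiableAt
  have hd1 : DifferentiableAt ℝ (p.coeff 1) x :=
    ((p.smooth 1).differentiable (by simp)).differentiableAt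
  have hconv : ∀ t : ℝ, (fun y => ∑ k ∈ Finset.range (1 + 1), t ^ k • p.coeff k y)
      = fun y => p.coeff 0 y + t • p.coeff 1 y := by
    intro t; funext y; simp [Finset.sum_range_succ]
  have hE : ∀ t : ℝ,
      (fderiv ℝ (p.coeff 0) x du + t • fderiv ℝ (p.coeff 1) x du
        + t • wedge n (S.F x) (S.W₁ x) (p.coeff 0 x + t • p.coeff 1 x) = 0)
      ∧ (fderiv ℝ (p.coeff 0) x dv + t • fderiv ℝ (p.coeff 1) x dv
        + t • wedge n (S.F x) (S.W₂ x) (p.coeff 0 x + t • p.coeff 1 x) = 0) := by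
    intro t
    have h := p.conserved t x
    rw [hconv t] at h
    have hdsum : fderiv ℝ (fun y => p.coeff 0 y + t • p.coeff 1 y) x
        = fderiv ℝ (p.coeff 0) x + t • fderiv ℝ (p.coeff 1) x := by
      rw [fderiv_fun_add hd0 (hd1.fun_const_smul t), fderiv_fun_const_smul hd1]
    rw [hdsum] at h
    constructor
    · have := h.1
      simpa only [ContinuousLinearMap.add_apply, ContinuousLinearMap.smul_apply,
        add_assoc] using this
    · have := h.2
      simpa only [ContinuousLinearMap.add_apply, ContinuousLinearMap.smul_apply,
        add_assoc] using this
  have hE0 := hE 0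
  have hD0u : fderiv ℝ (p.coeff 0) x du = 0 := by
    have := hE0.1; simpa using this
  have hD0v : fderiv ℝ (p.coeff 0) x dv = 0 := by
    have := hE0.2; simpa using this
  have key : ∀ (e : Surf) (W : Surf → MV n),
      (∀ t : ℝ, fderiv ℝ (p.coeff 0) x e + t • fderiv ℝ (p.coeff 1) x e
        + t • wedge n (S.F x) (W x) (p.coeff 0 x + t • p.coeff 1 x) = 0) →
      fderiv ℝ (p.coeff 0) x e = 0 →
      fderiv ℝ (p.coeff 1) x e = - wedge n (S.F x) (W x) (p.coeff 0 x)
        ∧ wedge n (S.F x) (W x) (p.coeff 1 x) = 0 := by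
    intro e W hAll hzero
    set A := fderiv ℝ (p.coeff 1) x e + wedge n (S.F x) (W x) (p.coeff 0 x) with hA
    set B := wedge n (S.F x) (W x) (p.coeff 1 x) with hB
    have e1 : A + B = 0 := by
      have := hAll 1
      rw [hzero, wedge_add_right, wedge_smul_right] at this
      rw [hA, hB]
      have h' : A + B = 0 + (1:ℝ) • fderiv ℝ (p.coeff 1) x e
          + (1:ℝ) • (wedge n (S.F x) (W x) (p.coeff 0 x)
            + (1:ℝ) • wedge n (S.F x) (W x) (p.coeff 1 x)) := by
        rw [hA, hB]; module
      rw [h']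
      exact this
    have e2 : (2:ℝ) • A + (4:ℝ) • B = 0 := by
      have := hAll 2
      rw [hzero, wedge_add_right, wedge_smul_right] at this
      have h' : (2:ℝ) • A + (4:ℝ) • B = 0 + (2:ℝ) • fderiv ℝ (p.coeff 1) x e
          + (2:ℝ) • (wedge n (S.F x) (W x) (p.coeff 0 x)
            + (2:ℝ) • wedge n (S.F x) (W x) (p.coeff 1 x)) := by
        rw [hA, hB]; module
      rw [h']
      exact this
    obtain ⟨hA0, hB0⟩ := solve2 e1 e2
    constructor
    · have := eq_neg_of_add_eq_zero_left hA0
      simpa using this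
    · exact hB0
  have hu := key du (S.W₁) (fun t => (hE t).1) hD0u
  have hv := key dv (S.W₂) (fun t => (hE t).2) hD0v
  exact ⟨⟨hD0u, hD0v⟩, ⟨hu.1, hv.1⟩, ⟨hu.2, hv.2⟩⟩

lemma FFe_zero {n : ℕ} (S : IsothermicSurface n) (y : Surf) (e : Surf) :
    mink n (S.F y) (fderiv ℝ S.F y e) = 0 := by
  have hF : Differentiable ℝ S.F := S.smooth_F.differentiable (by simp)
  have h := fderiv_zero_fun_apply (φ := fun z => mink n (S.F z) (S.F z)) S.F_null y e
  rw [fderiv_mink_apply (hF y) (hF y) e] at h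
  rw [mink_comm] at h
  linarith

lemma backward_dir {n : ℕ} {S : IsothermicSurface n} {m₁ m₂ : ℝ} (hne : m₁ ≠ m₂)
    (D₁ : DarbouxTransform n S m₁) (D₂ : DarbouxTransform n S m₂)
    (p : PolyConservedQuantity n S 1)
    (h1 : IsComplementary n p D₁) (h2 : IsComplementary n p D₂) (x : Surf) :
    sphericalSystem n S D₁.G x = sphericalSystem n S D₂.G x := by
  have hF : Differentiable ℝ S.F := S.smooth_F.differentiable (by simp)
  have hq : Differentiable ℝ (p.coeff 1) := (p.smooth 1).differentiable (by simp)
  -- (F, q) = 0 everywhere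
  have hFq : ∀ y, mink n (S.F y) (p.coeff 1 y) = 0 := by
    intro y
    rcases darboux_W_notspan D₁ y with hns | hns
    · exact notspan_wedge_zero hns ((pcq_eqs p y).2.2.1)
    · exact notspan_wedge_zero hns ((pcq_eqs p y).2.2.2)
  -- (F_e, q) = 0 everywhere
  have hFeq : ∀ (y : Surf), mink n (fderiv ℝ S.F y du) (p.coeff 1 y) = 0
      ∧ mink n (fderiv ℝ S.F y dv) (p.coeff 1 y) = 0 := by
    intro y
    constructor
    · have h := fderiv_zero_fun_apply (φ := fun z => mink n (S.F z) (p.coeff 1 z)) hFq y du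
      rw [fderiv_mink_apply (hF y) (hq y) du, (pcq_eqs p y).2.1.1, mink_neg_right,
        mink_self_wedge _ (S.W₁_perp y) (S.F_null y)] at h
      linarith
    · have h := fderiv_zero_fun_apply (φ := fun z => mink n (S.F z) (p.coeff 1 z)) hFq y dv
      rw [fderiv_mink_apply (hF y) (hq y) dv, (pcq_eqs p y).2.1.2, mink_neg_right,
        mink_self_wedge _ (S.W₂_perp y) (S.F_null y)] at h
      linarith
  -- scalars c₁ c₂
  obtain ⟨c₁, hc₁⟩ := Submodule.mem_span_singleton.mp
    (by rw [← (h1.2 x)]; exact Submodule.mem_span_singleton_self _ :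
      D₁.G x ∈ Submodule.span ℝ {pcEval p m₁ x})
  obtain ⟨c₂, hc₂⟩ := Submodule.mem_span_singleton.mp
    (by rw [← (h2.2 x)]; exact Submodule.mem_span_singleton_self _ :
      D₂.G x ∈ Submodule.span ℝ {pcEval p m₂ x})
  have hc₁ne : c₁ ≠ 0 := by
    intro h0; apply D₁.G_ne x; rw [← hc₁, h0, zero_smul]
  have hc₂ne : c₂ ≠ 0 := by
    intro h0; apply D₂.G_ne x; rw [← hc₂, h0, zero_smul]
  have hd₁ : mink n (S.F x) (pcEval p m₁ x) ≠ 0 := by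
    intro h0
    apply darboux_FG_ne D₁ x
    rw [← hc₁, mink_smul_right, h0, mul_zero]
  have hd₂ : mink n (S.F x) (pcEval p m₂ x) ≠ 0 := by
    intro h0
    apply darboux_FG_ne D₂ x
    rw [← hc₂, mink_smul_right, h0, mul_zero]
  have hP21 : pcEval p m₂ x = pcEval p m₁ x + (m₂ - m₁) • p.coeff 1 x := by
    rw [pcEval_eq, pcEval_eq]; module
  have hP12 : pcEval p m₁ x = pcEval p m₂ x + (m₁ - m₂) • p.coeff 1 x := by
    rw [pcEval_eq, pcEval_eq]; module
  apply le_antisymm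
  · exact spherical_incl hc₂ne hc₂.symm hc₁.symm hP12 hd₂ (S.F_null x)
      (FFe_zero S x du) (FFe_zero S x dv) (hFq x) (hFeq x).1 (hFeq x).2
  · exact spherical_incl hc₁ne hc₁.symm hc₂.symm hP21 hd₁ (S.F_null x)
      (FFe_zero S x du) (FFe_zero S x dv) (hFq x) (hFeq x).1 (hFeq x).2

lemma fderiv_wedgefun {n : ℕ} {f g : Surf → MV n} (hf : Differentiable ℝ f)
    (hg : Differentiable ℝ g) (z : MV n) (x e : Surf) :
    fderiv ℝ (fun y => wedge n (f y) (g y) z) x e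
      = mink n (fderiv ℝ f x e) z • g x + mink n (f x) z • fderiv ℝ g x e
        - (mink n (fderiv ℝ g x e) z • f x + mink n (g x) z • fderiv ℝ f x e) := by
  have hc1 : DifferentiableAt ℝ (fun y => mink n (f y) z) x :=
    differentiableAt_mink (hf x) (differentiableAt_const z)
  have hc2 : DifferentiableAt ℝ (fun y => mink n (g y) z) x :=
    differentiableAt_mink (hg x) (differentiableAt_const z)
  have h1 : DifferentiableAt ℝ (fun y => mink n (f y) z • g y) x := hc1.smul (hg x)
  have h2 : DifferentiableAt ℝ (fun y => mink n (g y) z • f y) x := hc2.smul (hf x)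
  have hfun : (fun y => wedge n (f y) (g y) z)
      = fun y => mink n (f y) z • g y - mink n (g y) z • f y := rfl
  have hdc1 : fderiv ℝ (fun y => mink n (f y) z) x e = mink n (fderiv ℝ f x e) z := by
    rw [fderiv_mink_apply (hf x) (differentiableAt_const z) e, fderiv_fun_const]
    simp [mink_zero_right]
  have hdc2 : fderiv ℝ (fun y => mink n (g y) z) x e = mink n (fderiv ℝ g x e) z := by
    rw [fderiv_mink_apply (hg x) (differentiableAt_const z) e, fderiv_fun_const]
    simp [mink_zero_right]
  rw [hfun, fderiv_fun_sub h1 h2, ContinuousLinearMap.sub_apply,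
    fderiv_fun_smul hc1 (hg x), fderiv_fun_smul hc2 (hf x)]
  simp only [ContinuousLinearMap.add_apply, ContinuousLinearMap.smul_apply,
    ContinuousLinearMap.smulRight_apply, hdc1, hdc2]
  module

lemma forward_dir {n : ℕ} {S : IsothermicSurface n} {m₁ m₂ : ℝ}
    (hm₁ : m₁ ≠ 0) (hm₂ : m₂ ≠ 0) (hne : m₁ ≠ m₂)
    (D₁ : DarbouxTransform n S m₁) (D₂ : DarbouxTransform n S m₂)
    (hyp : ∀ x, sphericalSystem n S D₁.G x = sphericalSystem n S D₂.G x) :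
    ∃ p : PolyConservedQuantity n S 1,
      IsComplementary n p D₁ ∧ IsComplementary n p D₂ := by
  have hF : Differentiable ℝ S.F := S.smooth_F.differentiable (by simp)
  have hW₁ : Differentiable ℝ S.W₁ := S.smooth_W₁.differentiable (by simp)
  have hW₂ : Differentiable ℝ S.W₂ := S.smooth_W₂.differentiable (by simp)
  have hG₁ : Differentiable ℝ D₁.G := D₁.smooth_G.differentiable (by simp)
  have hG₂ : Differentiable ℝ D₂.G := D₂.smooth_G.differentiable (by simp)
  set h₁ : Surf → ℝ := fun y => mink n (S.F y) (D₁.G y) with hh₁def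
  set h₂ : Surf → ℝ := fun y => mink n (S.F y) (D₂.G y) with hh₂def
  have h₁ne : ∀ y, h₁ y ≠ 0 := fun y => darboux_FG_ne D₁ y
  have h₂ne : ∀ y, h₂ y ≠ 0 := fun y => darboux_FG_ne D₂ y
  have hh₁ : Differentiable ℝ h₁ := fun y => differentiableAt_mink (hF y) (hG₁ y)
  have hh₂ : Differentiable ℝ h₂ := fun y => differentiableAt_mink (hF y) (hG₂ y)
  -- derivatives of h₁, h₂ in the coordinate directions
  have hdh : ∀ (y : Surf), ∀ e, e = du ∨ e = dv →
      (fderiv ℝ h₁ y e = mink n (fderiv ℝ S.F y e) (D₁.G y)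
        ∧ fderiv ℝ h₂ y e = mink n (fderiv ℝ S.F y e) (D₂.G y)) := by
    intro y e he
    have hwG : ∀ (m : ℝ) (D : DarbouxTransform n S m),
        mink n (S.F y) (fderiv ℝ D.G y e) = 0 := by
      intro m D
      rcases he with rfl | rfl
      · rw [(darboux_fderiv D y).1, mink_neg_right, mink_smul_right,
          mink_self_wedge _ (S.W₁_perp y) (S.F_null y)]; ring
      · rw [(darboux_fderiv D y).2, mink_neg_right, mink_smul_right,
          mink_self_wedge _ (S.W₂_perp y) (S.F_null y)]; ring
    constructor
    · rw [hh₁def]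
      rw [fderiv_mink_apply (hF y) (hG₁ y) e, hwG m₁ D₁, add_zero]
    · rw [hh₂def]
      rw [fderiv_mink_apply (hF y) (hG₂ y) e, hwG m₂ D₂, add_zero]
  -- the pointwise consequence of coincidence of the spherical systems
  have hrel : ∀ y, ∃ β : ℝ, h₂ y = β * h₁ y
      ∧ mink n (fderiv ℝ S.F y du) (D₂.G y) = β * mink n (fderiv ℝ S.F y du) (D₁.G y)
      ∧ mink n (fderiv ℝ S.F y dv) (D₂.G y) = β * mink n (fderiv ℝ S.F y dv) (D₁.G y) := by
    intro y
    have hmem : D₂.G y ∈ sphericalSystem n S D₁.G y := by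
      rw [hyp y]
      exact Submodule.mem_sup_left (Submodule.subset_span (by simp))
    obtain ⟨w, hw, z, hz, hsum⟩ := Submodule.mem_sup.mp hmem
    obtain ⟨α, β, hαβ⟩ := Submodule.mem_span_pair.mp hw
    rw [mem_mperp] at hz
    have hzF : mink n z (S.F y) = 0 := hz (S.F y) (Submodule.subset_span (by simp))
    have hzu : mink n z (pd du S.F y) = 0 :=
      hz (pd du S.F y) (Submodule.subset_span (by simp))
    have hzv : mink n z (pd dv S.F y) = 0 :=
      hz (pd dv S.F y) (Submodule.subset_span (by simp))
    have hG2 : D₂.G y = α • S.F y + β • D₁.G y + z := by rw [← hsum, ← hαβ]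
    refine ⟨β, ?_, ?_, ?_⟩
    · show mink n (S.F y) (D₂.G y) = β * mink n (S.F y) (D₁.G y)
      rw [hG2, mink_add_right, mink_add_right, mink_smul_right, mink_smul_right,
        S.F_null y, mink_comm n (S.F y) z, hzF]
      ring
    · rw [hG2, mink_add_right, mink_add_right, mink_smul_right, mink_smul_right,
        mink_comm n (fderiv ℝ S.F y du) (S.F y), FFe_zero S y du,
        mink_comm n (fderiv ℝ S.F y du) z]
      rw [show mink n z (fderiv ℝ S.F y du) = 0 from hzu]
      ring
    · rw [hG2, mink_add_right, mink_add_right, mink_smul_right, mink_smul_right,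
        mink_comm n (fderiv ℝ S.F y dv) (S.F y), FFe_zero S y dv,
        mink_comm n (fderiv ℝ S.F y dv) z]
      rw [show mink n z (fderiv ℝ S.F y dv) = 0 from hzv]
      ring
  -- the ratio h₂/h₁ is constant
  set ρ : Surf → ℝ := fun y => h₂ y * (h₁ y)⁻¹ with hρdef
  have hρdiff : Differentiable ℝ ρ := hh₂.mul (hh₁.inv h₁ne)
  have hρ' : ∀ y, fderiv ℝ ρ y = 0 := by
    intro y
    have hinv : HasFDerivAt (fun z => (h₁ z)⁻¹)
        ((ContinuousLinearMap.smulRight (1 : ℝ →L[ℝ] ℝ) (-((h₁ y) ^ 2)⁻¹)).comp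
          (fderiv ℝ h₁ y)) y :=
      (hasFDerivAt_inv (h₁ne y)).comp y (hh₁ y).hasFDerivAt
    have hmul : fderiv ℝ ρ y = h₂ y • fderiv ℝ (fun z => (h₁ z)⁻¹) y
        + (h₁ y)⁻¹ • fderiv ℝ h₂ y := fderiv_mul (hh₂ y) ((hh₁ y).inv (h₁ne y))
    have hdirval : ∀ e, e = du ∨ e = dv → fderiv ℝ ρ y e = 0 := by
      intro e he
      obtain ⟨β, hb1, hb2, hb3⟩ := hrel y
      have hb : fderiv ℝ h₂ y e = β * fderiv ℝ h₁ y e := by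
        rcases he with rfl | rfl
        · rw [(hdh y du (Or.inl rfl)).1, (hdh y du (Or.inl rfl)).2]; exact hb2
        · rw [(hdh y dv (Or.inr rfl)).1, (hdh y dv (Or.inr rfl)).2]; exact hb3
      rw [hmul]
      simp only [ContinuousLinearMap.add_apply, ContinuousLinearMap.smul_apply,
        hinv.fderiv, ContinuousLinearMap.comp_apply,
        ContinuousLinearMap.smulRight_apply, ContinuousLinearMap.one_apply]
      rw [hb, hb1]
      have := h₁ne y
      field_simp
      ring
      rw [show h₁ y * (h₁ y)⁻¹ ^ 2 = (h₁ y)⁻¹ by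
        rw [inv_pow, pow_two, mul_inv, ← mul_assoc, mul_inv_cancel₀ this, one_mul]]
      ring
    apply ContinuousLinearMap.ext
    intro v
    have hv : v = v.1 • du + v.2 • dv := by
      cases v with
      | mk a b => simp [du, dv, Prod.ext_iff]
    rw [hv, map_add, map_smul, map_smul, hdirval du (Or.inl rfl),
      hdirval dv (Or.inr rfl)]
    simp
  have hconst : ∀ y, ρ y = ρ 0 := fun y =>
    is_const_of_fderiv_eq_zero hρdiff hρ' y 0
  set κ : ℝ := ρ 0 with hκdef
  have hκne : κ ≠ 0 := by
    rw [hκdef, hρdef]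
    exact mul_ne_zero (h₂ne 0) (inv_ne_zero (h₁ne 0))
  have hκeq : ∀ y, h₂ y = κ * h₁ y := by
    intro y
    have h := hconst y
    rw [hρdef] at h
    have h1y := h₁ne y
    field_simp at h
    rw [h, mul_comm]
  have hκu : ∀ y, mink n (fderiv ℝ S.F y du) (D₂.G y)
      = κ * mink n (fderiv ℝ S.F y du) (D₁.G y) := by
    intro y
    obtain ⟨β, hb1, hb2, hb3⟩ := hrel y
    have hβκ : β = κ := by
      have := hκeq y
      rw [hb1] at this
      exact mul_right_cancel₀ (h₁ne y) this
    rw [hb2, hβκ]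
  have hκv : ∀ y, mink n (fderiv ℝ S.F y dv) (D₂.G y)
      = κ * mink n (fderiv ℝ S.F y dv) (D₁.G y) := by
    intro y
    obtain ⟨β, hb1, hb2, hb3⟩ := hrel y
    have hβκ : β = κ := by
      have := hκeq y
      rw [hb1] at this
      exact mul_right_cancel₀ (h₁ne y) this
    rw [hb3, hβκ]
  -- the candidate coefficients
  set δ : ℝ := m₂ - m₁ with hδdef
  have hδne : δ ≠ 0 := sub_ne_zero.mpr (Ne.symm hne)
  set Kq : Surf → MV n := fun y => δ⁻¹ • (D₂.G y - κ • D₁.G y) with hKqdef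
  set Ka : Surf → MV n := fun y => δ⁻¹ • ((m₂ * κ) • D₁.G y - m₁ • D₂.G y) with hKadef
  have hKqs : ContDiff ℝ (⊤ : ℕ∞) Kq := (D₂.smooth_G.sub (D₁.smooth_G.const_smul κ)).const_smul δ⁻¹
  have hKas : ContDiff ℝ (⊤ : ℕ∞) Ka :=
    ((D₁.smooth_G.const_smul (m₂ * κ)).sub (D₂.smooth_G.const_smul m₁)).const_smul δ⁻¹
  have hKqd : Differentiable ℝ Kq := hKqs.differentiable (by simp)
  have hKad : Differentiable ℝ Ka := hKas.differentiable (by simp)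
  have hFKq : ∀ y, mink n (S.F y) (Kq y) = 0 := by
    intro y
    show mink n (S.F y) (δ⁻¹ • (D₂.G y - κ • D₁.G y)) = 0
    rw [mink_smul_right, mink_sub_right, mink_smul_right,
      show mink n (S.F y) (D₂.G y) = κ * mink n (S.F y) (D₁.G y) from hκeq y]
    ring
  have hFuKq : ∀ y, mink n (fderiv ℝ S.F y du) (Kq y) = 0 := by
    intro y
    show mink n (fderiv ℝ S.F y du) (δ⁻¹ • (D₂.G y - κ • D₁.G y)) = 0
    rw [mink_smul_right, mink_sub_right, mink_smul_right, hκu y]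
    ring
  have hFvKq : ∀ y, mink n (fderiv ℝ S.F y dv) (Kq y) = 0 := by
    intro y
    show mink n (fderiv ℝ S.F y dv) (δ⁻¹ • (D₂.G y - κ • D₁.G y)) = 0
    rw [mink_smul_right, mink_sub_right, mink_smul_right, hκv y]
    ring
  -- closedness of η forces (W_e, Kq) = 0
  have hWKq : ∀ y, mink n (S.W₁ y) (Kq y) = 0 ∧ mink n (S.W₂ y) (Kq y) = 0 := by
    intro y
    have heq := S.eta_closed y (Kq y)
    rw [fderiv_wedgefun hF hW₂ (Kq y) y du, fderiv_wedgefun hF hW₁ (Kq y) y dv,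
      hFKq y, hFuKq y, hFvKq y] at heq
    have hli : (mink n (fderiv ℝ S.W₁ y dv) (Kq y)
          - mink n (fderiv ℝ S.W₂ y du) (Kq y)) • S.F y
        + (- mink n (S.W₂ y) (Kq y)) • pd du S.F y
        + (mink n (S.W₁ y) (Kq y)) • pd dv S.F y = 0 := by
      show (mink n (fderiv ℝ S.W₁ y dv) (Kq y)
          - mink n (fderiv ℝ S.W₂ y du) (Kq y)) • S.F y
        + (- mink n (S.W₂ y) (Kq y)) • fderiv ℝ S.F y du
        + (mink n (S.W₁ y) (Kq y)) • fderiv ℝ S.F y dv = 0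
      linear_combination (norm := module) heq
    have h3 := li3 (S.immersed y) hli
    refine ⟨h3.2.2, ?_⟩
    have := h3.2.1
    linarith
  have hwKq : ∀ y, wedge n (S.F y) (S.W₁ y) (Kq y) = 0
      ∧ wedge n (S.F y) (S.W₂ y) (Kq y) = 0 := by
    intro y
    constructor
    · rw [wedge, hFKq y, (hWKq y).1]; module
    · rw [wedge, hFKq y, (hWKq y).2]; module
  -- wedge relation between the two lifts
  have hwG21 : ∀ y,
      wedge n (S.F y) (S.W₁ y) (D₂.G y) = κ • wedge n (S.F y) (S.W₁ y) (D₁.G y)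
      ∧ wedge n (S.F y) (S.W₂ y) (D₂.G y) = κ • wedge n (S.F y) (S.W₂ y) (D₁.G y) := by
    intro y
    constructor
    · have h := (hwKq y).1
      rw [show Kq y = δ⁻¹ • (D₂.G y - κ • D₁.G y) from rfl, wedge_smul_right,
        wedge_sub_right, wedge_smul_right] at h
      exact sub_eq_zero.mp ((smul_eq_zero.mp h).resolve_left (inv_ne_zero hδne))
    · have h := (hwKq y).2
      rw [show Kq y = δ⁻¹ • (D₂.G y - κ • D₁.G y) from rfl, wedge_smul_right,
        wedge_sub_right, wedge_smul_right] at h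
      exact sub_eq_zero.mp ((smul_eq_zero.mp h).resolve_left (inv_ne_zero hδne))
  -- coordinate derivatives of Kq and Ka
  have hdKq' : ∀ y e, fderiv ℝ Kq y e
      = δ⁻¹ • (fderiv ℝ D₂.G y e - κ • fderiv ℝ D₁.G y e) := by
    intro y e
    have h1 : fderiv ℝ Kq y = δ⁻¹ • fderiv ℝ (fun z => D₂.G z - κ • D₁.G z) y :=
      fderiv_const_smul ((hG₂ y).sub ((hG₁ y).const_smul κ)) δ⁻¹
    have h2 : fderiv ℝ (fun z => D₂.G z - κ • D₁.G z) y
        = fderiv ℝ D₂.G y - κ • fderiv ℝ D₁.G y := by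
      rw [fderiv_fun_sub (hG₂ y) ((hG₁ y).fun_const_smul κ), fderiv_fun_const_smul (hG₁ y)]
    rw [h1, h2]
    simp
  have hdKa' : ∀ y e, fderiv ℝ Ka y e
      = δ⁻¹ • ((m₂ * κ) • fderiv ℝ D₁.G y e - m₁ • fderiv ℝ D₂.G y e) := by
    intro y e
    have h1 : fderiv ℝ Ka y
        = δ⁻¹ • fderiv ℝ (fun z => (m₂ * κ) • D₁.G z - m₁ • D₂.G z) y :=
      fderiv_const_smul (((hG₁ y).const_smul (m₂ * κ)).sub ((hG₂ y).const_smul m₁)) δ⁻¹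
    have h2 : fderiv ℝ (fun z => (m₂ * κ) • D₁.G z - m₁ • D₂.G z) y
        = (m₂ * κ) • fderiv ℝ D₁.G y - m₁ • fderiv ℝ D₂.G y := by
      rw [fderiv_fun_sub ((hG₁ y).fun_const_smul (m₂ * κ)) ((hG₂ y).fun_const_smul m₁),
        fderiv_fun_const_smul (hG₁ y), fderiv_fun_const_smul (hG₂ y)]
    rw [h1, h2]
    simp
  have hdKa0 : ∀ y, fderiv ℝ Ka y du = 0 ∧ fderiv ℝ Ka y dv = 0 := by
    intro y
    constructor
    · rw [hdKa' y du, (darboux_fderiv D₁ y).1, (darboux_fderiv D₂ y).1, (hwG21 y).1]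
      match_scalars
      ring
    · rw [hdKa' y dv, (darboux_fderiv D₁ y).2, (darboux_fderiv D₂ y).2, (hwG21 y).2]
      match_scalars
      ring
  have hdKq0 : ∀ y, fderiv ℝ Kq y du = - wedge n (S.F y) (S.W₁ y) (Ka y)
      ∧ fderiv ℝ Kq y dv = - wedge n (S.F y) (S.W₂ y) (Ka y) := by
    intro y
    constructor
    · rw [hdKq' y du, (darboux_fderiv D₁ y).1, (darboux_fderiv D₂ y).1, (hwG21 y).1,
        show Ka y = δ⁻¹ • ((m₂ * κ) • D₁.G y - m₁ • D₂.G y) from rfl,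
        wedge_smul_right, wedge_sub_right, wedge_smul_right, wedge_smul_right,
        (hwG21 y).1]
      match_scalars
      ring
    · rw [hdKq' y dv, (darboux_fderiv D₁ y).2, (darboux_fderiv D₂ y).2, (hwG21 y).2,
        show Ka y = δ⁻¹ • ((m₂ * κ) • D₁.G y - m₁ • D₂.G y) from rfl,
        wedge_smul_right, wedge_sub_right, wedge_smul_right, wedge_smul_right,
        (hwG21 y).2]
      match_scalars
      ring
  -- Kq is not identically zero
  have hKqne : Kq ≠ 0 := by
    intro h0
    have hGeq : D₂.G = fun y => κ • D₁.G y := by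
      funext y
      have h : Kq y = 0 := by rw [h0]; rfl
      rw [show Kq y = δ⁻¹ • (D₂.G y - κ • D₁.G y) from rfl] at h
      exact sub_eq_zero.mp ((smul_eq_zero.mp h).resolve_left (inv_ne_zero hδne))
    have hd2 : fderiv ℝ D₂.G 0 du = κ • fderiv ℝ D₁.G 0 du := by
      rw [hGeq, fderiv_fun_const_smul (hG₁ 0)]
      simp
    have hG20 : D₂.G 0 = κ • D₁.G 0 := by rw [hGeq]
    have hv1 := (darboux_fderiv D₂ 0).1
    rw [hG20, wedge_smul_right] at hv1
    have hv2 := (darboux_fderiv D₁ 0).1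
    rw [hv2, hv1] at hd2
    -- hd2 : -(m₂ • (κ • w)) = κ • -(m₁ • w)
    have hw0 : wedge n (S.F 0) (S.W₁ 0) (D₁.G 0) = 0 := by
      have hcoef : ((κ * (m₂ - m₁)) : ℝ) • wedge n (S.F 0) (S.W₁ 0) (D₁.G 0) = 0 := by
        have hsub : κ • -(m₁ • wedge n (S.F 0) (S.W₁ 0) (D₁.G 0))
            - -(m₂ • (κ • wedge n (S.F 0) (S.W₁ 0) (D₁.G 0)))
            = (κ * (m₂ - m₁)) • wedge n (S.F 0) (S.W₁ 0) (D₁.G 0) := by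
          match_scalars; ring
        rw [← hsub, hd2, sub_self]
      have := smul_eq_zero.mp hcoef
      rcases this with h | h
      · exfalso
        apply hκne
        have hδ0 : (m₂ - m₁) ≠ 0 := by rw [← hδdef]; exact hδne
        rcases mul_eq_zero.mp h with h' | h'
        · exact h'
        · exact absurd h' hδ0
      · exact h
    have hzero : fderiv ℝ D₁.G 0 du = 0 := by rw [hv2, hw0]; simp
    have h1 := li3 (D₁.immersed 0) (r := 0) (s := 1) (t := 0) ?_
    · exact one_ne_zero h1.2.1
    · show (0:ℝ) • D₁.G 0 + (1:ℝ) • fderiv ℝ D₁.G 0 du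
        + (0:ℝ) • fderiv ℝ D₁.G 0 dv = 0
      rw [hzero]; module
  -- key algebraic identities
  have hδform1 : ∀ z, (m₂ * κ) • D₁.G z - m₁ • D₂.G z + m₁ • (D₂.G z - κ • D₁.G z)
      = δ • (κ • D₁.G z) := by
    intro z; rw [hδdef]; module
  have hδform2 : ∀ z, (m₂ * κ) • D₁.G z - m₁ • D₂.G z + m₂ • (D₂.G z - κ • D₁.G z)
      = δ • D₂.G z := by
    intro z; rw [hδdef]; module
  have hid1 : ∀ z, Ka z + m₁ • Kq z = κ • D₁.G z := by
    intro z
    have h1 : Ka z + m₁ • Kq z = δ⁻¹ • ((m₂ * κ) • D₁.G z - m₁ • D₂.G z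
        + m₁ • (D₂.G z - κ • D₁.G z)) := by
      show δ⁻¹ • ((m₂ * κ) • D₁.G z - m₁ • D₂.G z)
        + m₁ • (δ⁻¹ • (D₂.G z - κ • D₁.G z)) = _
      module
    rw [h1, hδform1 z, inv_smul_smul₀ hδne]
  have hid2 : ∀ z, Ka z + m₂ • Kq z = D₂.G z := by
    intro z
    have h1 : Ka z + m₂ • Kq z = δ⁻¹ • ((m₂ * κ) • D₁.G z - m₁ • D₂.G z
        + m₂ • (D₂.G z - κ • D₁.G z)) := by
      show δ⁻¹ • ((m₂ * κ) • D₁.G z - m₁ • D₂.G z)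
        + m₂ • (δ⁻¹ • (D₂.G z - κ • D₁.G z)) = _
      module
    rw [h1, hδform2 z, inv_smul_smul₀ hδne]
  -- assemble the conserved quantity
  set coeffF : ℕ → Surf → MV n :=
    fun k => if k = 0 then Ka else if k = 1 then Kq else 0 with hcoeff
  have hc0 : coeffF 0 = Ka := by simp [hcoeff]
  have hc1 : coeffF 1 = Kq := by simp [hcoeff]
  refine ⟨⟨coeffF, ?_, ?_, ?_, ?_⟩, ?_, ?_⟩
  · intro k
    rcases k with _ | _ | k
    · rw [hc0]; exact hKas
    · rw [hc1]; exact hKqs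
    · have h0 : (k + 1 + 1 : ℕ) ≠ 0 := by omega
      have h1 : (k + 1 + 1 : ℕ) ≠ 1 := by omega
      have : coeffF (k + 1 + 1) = 0 := by simp [hcoeff, h0, h1]
      rw [this]
      exact contDiff_const (c := (0 : MV n))
  · intro k hk
    have h0 : k ≠ 0 := by omega
    have h1 : k ≠ 1 := by omega
    simp [hcoeff, h0, h1]
  · rw [hc1]; exact hKqne
  · intro t x
    have hval : ∀ z, (∑ k ∈ Finset.range (1 + 1), t ^ k • coeffF k z)
        = Ka z + t • Kq z := by
      intro z
      rw [Finset.sum_range_succ, Finset.sum_range_one, hc0, hc1]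
      simp
    have hder : fderiv ℝ (fun z => Ka z + t • Kq z) x
        = fderiv ℝ Ka x + t • fderiv ℝ Kq x := by
      rw [fderiv_fun_add (hKad x) ((hKqd x).fun_const_smul t), fderiv_fun_const_smul (hKqd x)]
    constructor
    · simp only [hval, hder]
      simp only [ContinuousLinearMap.add_apply, ContinuousLinearMap.smul_apply]
      rw [(hdKa0 x).1, (hdKq0 x).1, wedge_add_right,
        wedge_smul_right n (S.F x) (S.W₁ x) t (Kq x), (hwKq x).1]
      module
    · simp only [hval, hder]
      simp only [ContinuousLinearMap.add_apply, ContinuousLinearMap.smul_apply]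
      rw [(hdKa0 x).2, (hdKq0 x).2, wedge_add_right,
        wedge_smul_right n (S.F x) (S.W₂ x) t (Kq x), (hwKq x).2]
      module
  · -- complementary for D₁
    have hpe : ∀ x, (∑ k ∈ Finset.range (1 + 1), m₁ ^ k • coeffF k x)
        = κ • D₁.G x := by
      intro x
      rw [Finset.sum_range_succ, Finset.sum_range_one, hc0, hc1]
      simpa using hid1 x
    constructor
    · intro x
      show mink n (∑ k ∈ Finset.range (1 + 1), m₁ ^ k • coeffF k x)
        (∑ k ∈ Finset.range (1 + 1), m₁ ^ k • coeffF k x) = 0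
      rw [hpe x, mink_smul_left, mink_smul_right, D₁.G_null x]
      ring
    · intro x
      show Submodule.span ℝ {D₁.G x}
        = Submodule.span ℝ {∑ k ∈ Finset.range (1 + 1), m₁ ^ k • coeffF k x}
      rw [hpe x]
      exact (Submodule.span_singleton_smul_eq (isUnit_iff_ne_zero.mpr hκne) _).symm
  · -- complementary for D₂
    have hpe : ∀ x, (∑ k ∈ Finset.range (1 + 1), m₂ ^ k • coeffF k x)
        = D₂.G x := by
      intro x
      rw [Finset.sum_range_succ, Finset.sum_range_one, hc0, hc1]
      simpa using hid2 x
    constructor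
    · intro x
      show mink n (∑ k ∈ Finset.range (1 + 1), m₂ ^ k • coeffF k x)
        (∑ k ∈ Finset.range (1 + 1), m₂ ^ k • coeffF k x) = 0
      rw [hpe x]
      exact D₂.G_null x
    · intro x
      show Submodule.span ℝ {D₂.G x}
        = Submodule.span ℝ {∑ k ∈ Finset.range (1 + 1), m₂ ^ k • coeffF k x}
      rw [hpe x]

end Aux

/-- Theorem: the spherical systems through two Darboux transforms of distinct
parameters coincide if and only if the surface is special isothermic of type
`1` with the two Darboux transforms as complementary surfaces. -/
theorem spherical_systems_coincide_iff_type_one (n : ℕ) (hn : 3 ≤ n)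
    (S : IsothermicSurface n) (hfull : Full n S)
    (m₁ m₂ : ℝ) (hm₁ : m₁ ≠ 0) (hm₂ : m₂ ≠ 0) (hne : m₁ ≠ m₂)
    (D₁ : DarbouxTransform n S m₁) (D₂ : DarbouxTransform n S m₂) :
    (∀ x, sphericalSystem n S D₁.G x = sphericalSystem n S D₂.G x)
      ↔ ∃ p : PolyConservedQuantity n S 1,
          IsComplementary n p D₁ ∧ IsComplementary n p D₂ := by
  constructor
  · intro hyp
    exact forward_dir hm₁ hm₂ hne D₁ D₂ hyp
  · rintro ⟨p, hp1, hp2⟩ x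
    exact backward_dir hne D₁ D₂ p hp1 hp2 x
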